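/- Let f : ℝ^n → ℝ be convex and differentiable with L-Lipschitz gradient (in the quadratic upper bound sense), let g ∈ ℝ^n, let x⁺ = x − (1/(2L))g, and let δ² = ‖g − ∇f(x)‖². Then for every z ∈ ℝ^n, ⟨g, x − z⟩ ≤ f(x) − f(x⁺) + L‖x − z‖² − L‖x⁺ − z‖² + δ²/(2L). -/

import Mathlib

/-! With `c = 1 / (2L)` and `x⁺ = x - c • g`, expanding the square gives
`L‖x - z‖² - L‖x⁺ - z‖² = ⟪g, x - z⟫ - c‖g‖² / 2`, so it remains to show
`c‖g‖² / 2 ≤ f x - f x⁺ + c δ²`. The quadratic upper bound at `x` gives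
`f x - f x⁺ ≥ c ⟪∇f x, g⟫ - c‖g‖² / 4`, and `3/4 ‖g‖² ≤ ⟪∇f x, g⟫ + δ²` is
`0 ≤ ‖∇f x - g / 2‖²` expanded. -/

open RealInnerProductSpace

section

variable {E : Type*} [NormedAddCommGroup E] [InnerProductSpace ℝ E]

theorem norm_sub_smul_sub_sq (x z g : E) (c : ℝ) :
    ‖x - c • g - z‖ ^ 2 = ‖x - z‖ ^ 2 - 2 * c * ⟪g, x - z⟫ + c ^ 2 * ‖g‖ ^ 2 := by
  rw [sub_right_comm, norm_sub_sq_real, real_inner_smul_right, norm_smul, mul_pow,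
    Real.norm_eq_abs, sq_abs, real_inner_comm]
  ring

theorem three_quarters_norm_sq_le_inner_add_norm_sub_sq (d g : E) :
    3 / 4 * ‖g‖ ^ 2 ≤ ⟪d, g⟫ + ‖g - d‖ ^ 2 := by
  have h := sq_nonneg ‖d - (1 / 2 : ℝ) • g‖
  rw [norm_sub_sq_real, real_inner_smul_right, norm_smul, mul_pow, Real.norm_eq_abs,
    sq_abs] at h
  rw [norm_sub_sq_real, real_inner_comm d g]
  linarith

theorem le_of_quadratic_upper_bound_sub_smul {f : E → ℝ} {d : E} {L : ℝ} {x : E}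
    (hsmooth : ∀ y, f y ≤ f x + ⟪d, y - x⟫ + (L / 2) * ‖y - x‖ ^ 2) (g : E) (c : ℝ) :
    f (x - c • g) ≤ f x - c * ⟪d, g⟫ + L / 2 * c ^ 2 * ‖g‖ ^ 2 := by
  have h := hsmooth (x - c • g)
  rw [sub_sub_cancel_left, inner_neg_right, real_inner_smul_right, norm_neg, norm_smul,
    mul_pow, Real.norm_eq_abs, sq_abs] at h
  linarith

end

theorem convex_sgd_key_inequality_general (n : ℕ) (f : EuclideanSpace ℝ (Fin n) → ℝ)
    (grad : EuclideanSpace ℝ (Fin n) → EuclideanSpace ℝ (Fin n))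
    (L : ℝ) (hL : 0 < L)
    (hsmooth : ∀ x y, f y ≤ f x + ⟪grad x, y - x⟫ + (L / 2) * ‖y - x‖ ^ 2)
    (x g : EuclideanSpace ℝ (Fin n)) :
    ∀ z : EuclideanSpace ℝ (Fin n),
      ⟪g, x - z⟫ ≤ f x - f (x - (1 / (2 * L)) • g) + L * ‖x - z‖ ^ 2
        - L * ‖x - (1 / (2 * L)) • g - z‖ ^ 2 + ‖g - grad x‖ ^ 2 / (2 * L) := by
  intro z
  generalize hc : 1 / (2 * L) = c
  have hLc : L * c = 1 / 2 := by rw [← hc]; field_simp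
  have hδ : ‖g - grad x‖ ^ 2 / (2 * L) = c * ‖g - grad x‖ ^ 2 := by rw [← hc]; ring
  have descent := le_of_quadratic_upper_bound_sub_smul (hsmooth x) g c
  have hc_nonneg : 0 ≤ c := by rw [← hc]; positivity
  have hcross := mul_le_mul_of_nonneg_left
    (three_quarters_norm_sq_le_inner_add_norm_sub_sq (grad x) g) hc_nonneg
  rw [norm_sub_smul_sub_sq, hδ]
  linear_combination descent + hcross + (3 / 2 * c * ‖g‖ ^ 2 - 2 * ⟪g, x - z⟫) * hLc

theorem convex_sgd_key_inequality (n : ℕ) (f : EuclideanSpace ℝ (Fin n) → ℝ)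
    (grad : EuclideanSpace ℝ (Fin n) → EuclideanSpace ℝ (Fin n))
    (hdiff : ∀ x, HasGradientAt f (grad x) x)
    (hconv : ConvexOn ℝ Set.univ f)
    (L : ℝ) (hL : 0 < L)
    (hsmooth : ∀ x y, f y ≤ f x + ⟪grad x, y - x⟫ + (L / 2) * ‖y - x‖ ^ 2)
    (x g : EuclideanSpace ℝ (Fin n)) :
    ∀ z : EuclideanSpace ℝ (Fin n),
      ⟪g, x - z⟫ ≤ f x - f (x - (1 / (2 * L)) • g) + L * ‖x - z‖ ^ 2
        - L * ‖x - (1 / (2 * L)) • g - z‖ ^ 2 + ‖g - grad x‖ ^ 2 / (2 * L) :=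
  convex_sgd_key_inequality_general n f grad L hL hsmooth x g
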